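/- arXiv:2005.10741 — 2 statements merged into one kernel-verified Lean document; each statement's English description precedes it below -/
import Mathlib

section
/- Let x be chosen uniformly among binary vectors of length n and Hamming weight w, and r be chosen uniformly and independently among binary vectors of length n and weight w_r. Let z = x · r denote the cyclic convolution product in F_2[X]/(X^n−1). Then for every index k, the probability that z_k = 1 equals (1 / (C(n,w)·C(n,w_r))) · Σ_{ℓ odd, 1 ≤ ℓ ≤ min(w, w_r)} C(n,ℓ)·C(n−ℓ, w−ℓ)·C(n−w, w_r−ℓ). -/
open Finset

private lemma zmod2_one_iff (m : ℕ) : ((m : ZMod 2) = 1) ↔ Odd m := by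
  rw [Nat.odd_iff, ← ZMod.natCast_mod m 2]
  rcases Nat.mod_two_eq_zero_or_one m with h | h <;> rw [h] <;> simp

private lemma zmod2_mul (a b : ZMod 2) :
    a * b = if a ≠ 0 ∧ b ≠ 0 then 1 else 0 := by revert a b; decide

private lemma countT {n : ℕ} (S : Finset (Fin n)) (wr ℓ : ℕ) (hℓ : ℓ ≤ wr) :
    (univ.filter (fun T : Finset (Fin n) => T.card = wr ∧ (S ∩ T).card = ℓ)).card
      = S.card.choose ℓ * (n - S.card).choose (wr - ℓ) := by
  have hc : S.card.choose ℓ * (n - S.card).choose (wr - ℓ)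
      = ((S.powersetCard ℓ) ×ˢ (Sᶜ.powersetCard (wr - ℓ))).card := by
    rw [card_product, card_powersetCard, card_powersetCard, card_compl, Fintype.card_fin]
  rw [hc]
  apply card_bij' (fun T _ => (S ∩ T, T \ S)) (fun p _ => p.1 ∪ p.2)
  · intro T hT
    simp only [mem_filter, mem_univ, true_and] at hT
    have hsd : (T \ S).card + (T ∩ S).card = T.card := card_sdiff_add_card_inter T S
    rw [inter_comm] at hsd
    simp only [mem_product, mem_powersetCard]
    refine ⟨⟨inter_subset_left, hT.2⟩, ⟨?_, by omega⟩⟩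
    intro x hx
    simp only [mem_sdiff] at hx
    simp [mem_compl, hx.2]
  · intro p hp
    simp only [mem_product, mem_powersetCard] at hp
    obtain ⟨⟨hA, hAc⟩, ⟨hB, hBc⟩⟩ := hp
    have hdisj : Disjoint p.1 p.2 := by
      refine disjoint_left.2 fun x hx1 hx2 => ?_
      exact (mem_compl.1 (hB hx2)) (hA hx1)
    have hSA : S ∩ p.1 = p.1 := inter_eq_right.2 hA
    have hSB : S ∩ p.2 = ∅ := by
      refine eq_empty_of_forall_notMem fun x hx => ?_
      simp only [mem_inter] at hx
      exact (mem_compl.1 (hB hx.2)) hx.1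
    simp only [mem_filter, mem_univ, true_and]
    constructor
    · rw [card_union_of_disjoint hdisj, hAc, hBc]; omega
    · rw [inter_union_distrib_left, hSA, hSB, union_empty, hAc]
  · intro T hT
    ext x
    simp only [mem_union, mem_inter, mem_sdiff]
    tauto
  · intro p hp
    simp only [mem_product, mem_powersetCard] at hp
    obtain ⟨⟨hA, hAc⟩, ⟨hB, hBc⟩⟩ := hp
    have h1 : S ∩ (p.1 ∪ p.2) = p.1 := by
      ext x
      simp only [mem_inter, mem_union]
      constructor
      · rintro ⟨hxS, hx | hx⟩
        · exact hx
        · exact absurd hxS (mem_compl.1 (hB hx))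
      · intro hx; exact ⟨hA hx, Or.inl hx⟩
    have h2 : (p.1 ∪ p.2) \ S = p.2 := by
      ext x
      simp only [mem_sdiff, mem_union]
      constructor
      · rintro ⟨hx | hx, hxS⟩
        · exact absurd (hA hx) hxS
        · exact hx
      · intro hx; exact ⟨Or.inr hx, mem_compl.1 (hB hx)⟩
    rw [h1, h2]

private lemma countPairsFixed {n : ℕ} (w wr ℓ : ℕ) (hℓw : ℓ ≤ w) (hℓwr : ℓ ≤ wr) :
    (univ.filter (fun q : Finset (Fin n) × Finset (Fin n) =>
        q.1.card = w ∧ q.2.card = wr ∧ (q.1 ∩ q.2).card = ℓ)).card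
      = n.choose w * (w.choose ℓ * (n - w).choose (wr - ℓ)) := by
  rw [card_eq_sum_card_fiberwise (f := Prod.fst)
    (t := univ.filter (fun S : Finset (Fin n) => S.card = w))
    (fun q hq => by
      change _ ∈ (_ : Finset _) at hq ⊢
      simp only [mem_filter, mem_univ, true_and] at hq ⊢
      exact hq.1)]
  have hfib : ∀ S ∈ univ.filter (fun S : Finset (Fin n) => S.card = w),
      ((univ.filter (fun q : Finset (Fin n) × Finset (Fin n) =>
        q.1.card = w ∧ q.2.card = wr ∧ (q.1 ∩ q.2).card = ℓ)).filter
        (fun q => q.1 = S)).card = w.choose ℓ * (n - w).choose (wr - ℓ) := by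
    intro S hS
    simp only [mem_filter, mem_univ, true_and] at hS
    rw [← hS, ← countT S wr ℓ hℓwr, hS]
    refine card_bij' (fun q _ => q.2) (fun T _ => (S, T)) ?_hi ?_hj ?_li ?_ri
    case _hi =>
      intro q hq
      rw [mem_filter, mem_filter] at hq
      rw [mem_filter]
      obtain ⟨⟨_, _, h2, h3⟩, h4⟩ := hq
      rw [h4] at h3
      exact ⟨mem_univ _, h2, h3⟩
    case _hj =>
      intro T hT
      rw [mem_filter] at hT
      rw [mem_filter, mem_filter]
      exact ⟨⟨mem_univ _, hS, hT.2.1, hT.2.2⟩, rfl⟩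
    case _li =>
      intro q hq
      beta_reduce
      rw [mem_filter] at hq
      obtain ⟨q1, q2⟩ := q
      have h : q1 = S := hq.2
      rw [show ((q1, q2) : Finset (Fin n) × Finset (Fin n)).2 = q2 from rfl, Prod.mk.injEq]
      exact ⟨h.symm, rfl⟩
    case _ri =>
      intro T _
      beta_reduce
      rfl
  rw [Finset.sum_congr rfl hfib, Finset.sum_const, smul_eq_mul]
  congr 1
  have : (univ.filter (fun S : Finset (Fin n) => S.card = w)) = univ.powersetCard w := by
    ext S; simp [mem_powersetCard]
  rw [this, card_powersetCard, card_univ, Fintype.card_fin]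

private lemma countPairs {n : ℕ} (w wr : ℕ) (hw : w ≤ n) (hwr : wr ≤ n) :
    (univ.filter (fun q : Finset (Fin n) × Finset (Fin n) =>
        q.1.card = w ∧ q.2.card = wr ∧ Odd (q.1 ∩ q.2).card)).card
      = ∑ ℓ ∈ (Finset.Icc 1 (min w wr)).filter (fun ℓ => Odd ℓ),
          n.choose ℓ * (n - ℓ).choose (w - ℓ) * (n - w).choose (wr - ℓ) := by
  rw [card_eq_sum_card_fiberwise (f := fun q => (q.1 ∩ q.2).card)
    (t := (Finset.Icc 1 (min w wr)).filter (fun ℓ => Odd ℓ))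
    (fun q hq => by
      change _ ∈ (_ : Finset _) at hq ⊢
      simp only [mem_filter, mem_univ, true_and] at hq ⊢
      obtain ⟨h1, h2, h3⟩ := hq
      refine ⟨mem_Icc.2 ⟨h3.pos, le_min ?_ ?_⟩, h3⟩
      · rw [← h1]; exact card_le_card inter_subset_left
      · rw [← h2]; exact card_le_card inter_subset_right)]
  refine Finset.sum_congr rfl fun ℓ hℓ => ?_
  simp only [mem_filter, mem_Icc] at hℓ
  obtain ⟨⟨h1, h2⟩, hodd⟩ := hℓ
  have hℓw : ℓ ≤ w := h2.trans (min_le_left _ _)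
  have hℓwr : ℓ ≤ wr := h2.trans (min_le_right _ _)
  have hset : ((univ.filter (fun q : Finset (Fin n) × Finset (Fin n) =>
      q.1.card = w ∧ q.2.card = wr ∧ Odd (q.1 ∩ q.2).card)).filter
      (fun q => (q.1 ∩ q.2).card = ℓ))
      = univ.filter (fun q : Finset (Fin n) × Finset (Fin n) =>
        q.1.card = w ∧ q.2.card = wr ∧ (q.1 ∩ q.2).card = ℓ) := by
    rw [filter_filter]
    refine filter_congr fun q _ => ?_
    constructor
    · rintro ⟨⟨ha, hb, _⟩, hc⟩; exact ⟨ha, hb, hc⟩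
    · rintro ⟨ha, hb, hc⟩; exact ⟨⟨ha, hb, hc ▸ hodd⟩, hc⟩
  rw [hset, countPairsFixed w wr ℓ hℓw hℓwr, ← mul_assoc, Nat.choose_mul hℓw]

private lemma countFun {n : ℕ} [NeZero n] (w wr : ℕ) (k : Fin n) :
    (Finset.univ.filter
      (fun p : (Fin n → ZMod 2) × (Fin n → ZMod 2) =>
        (Finset.univ.filter (fun i => p.1 i ≠ 0)).card = w ∧
        (Finset.univ.filter (fun i => p.2 i ≠ 0)).card = wr ∧
        (∑ i : Fin n, p.1 i * p.2 (k - i)) = 1)).card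
      = (univ.filter (fun q : Finset (Fin n) × Finset (Fin n) =>
          q.1.card = w ∧ q.2.card = wr ∧ Odd (q.1 ∩ q.2).card)).card := by
  have hsum : ∀ p : (Fin n → ZMod 2) × (Fin n → ZMod 2),
      (∑ i : Fin n, p.1 i * p.2 (k - i))
        = (((univ.filter (fun i => p.1 i ≠ 0)) ∩
            (univ.filter (fun j => p.2 (k - j) ≠ 0))).card : ZMod 2) := by
    intro p
    rw [← filter_and]
    rw [← Finset.sum_boole]
    exact Finset.sum_congr rfl fun i _ => zmod2_mul _ _
  have hTcard : ∀ r : Fin n → ZMod 2,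
      (univ.filter (fun j => r (k - j) ≠ 0)) =
        (univ.filter (fun i => r i ≠ 0)).image (fun i => k - i) := by
    intro r
    ext j
    simp only [mem_filter, mem_univ, true_and, mem_image]
    constructor
    · intro h
      exact ⟨k - j, h, sub_sub_cancel k j⟩
    · rintro ⟨i, hi, rfl⟩
      rwa [sub_sub_cancel]
  have hinj : Function.Injective (fun i : Fin n => k - i) := sub_right_injective
  refine card_bij'
    (fun (p : (Fin n → ZMod 2) × (Fin n → ZMod 2)) _ =>
      (univ.filter (fun i => p.1 i ≠ 0), univ.filter (fun j => p.2 (k - j) ≠ 0)))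
    (fun (q : Finset (Fin n) × Finset (Fin n)) _ =>
      ((fun i => if i ∈ q.1 then (1 : ZMod 2) else 0),
       (fun i => if k - i ∈ q.2 then (1 : ZMod 2) else 0))) ?_hi ?_hj ?_li ?_ri
  case _hi =>
    intro p hp
    beta_reduce
    rw [mem_filter] at hp
    rw [mem_filter]
    obtain ⟨-, h1, h2, h3⟩ := hp
    refine ⟨mem_univ _, h1, ?_, ?_⟩
    · rw [hTcard p.2, card_image_of_injective _ hinj, h2]
    · rw [hsum p] at h3
      exact (zmod2_one_iff _).1 h3
  case _hj =>
    intro q hq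
    beta_reduce
    rw [mem_filter] at hq
    rw [mem_filter]
    obtain ⟨-, h1, h2, h3⟩ := hq
    have e1 : (univ.filter (fun i => (if i ∈ q.1 then (1 : ZMod 2) else 0) ≠ 0)) = q.1 := by
      ext i
      simp only [mem_filter, mem_univ, true_and]
      by_cases h : i ∈ q.1 <;> simp [h]
    have e2 : (univ.filter (fun i => (if k - i ∈ q.2 then (1 : ZMod 2) else 0) ≠ 0))
        = q.2.image (fun i => k - i) := by
      ext i
      simp only [mem_filter, mem_univ, true_and, mem_image]
      constructor
      · intro h
        by_cases hm : k - i ∈ q.2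
        · exact ⟨k - i, hm, sub_sub_cancel k i⟩
        · simp [hm] at h
      · rintro ⟨j, hj, rfl⟩
        rw [sub_sub_cancel]
        simp [hj]
    refine ⟨mem_univ _, by rw [e1, h1], by rw [e2, card_image_of_injective _ hinj, h2], ?_⟩
    rw [hsum ((fun i => if i ∈ q.1 then 1 else 0), (fun i => if k - i ∈ q.2 then 1 else 0))]
    simp only
    have e2' : (univ.filter (fun j =>
        (fun i => if k - i ∈ q.2 then (1 : ZMod 2) else 0) (k - j) ≠ 0)) = q.2 := by
      ext j
      simp only [mem_filter, mem_univ, true_and, sub_sub_cancel]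
      by_cases h : j ∈ q.2 <;> simp [h]
    rw [e1, e2']
    exact (zmod2_one_iff _).2 h3
  case _li =>
    intro p hp
    beta_reduce
    have hval : ∀ a : ZMod 2, (if a ≠ 0 then (1 : ZMod 2) else 0) = a := by decide
    have hx : (fun i => if i ∈ univ.filter (fun i => p.1 i ≠ 0) then (1 : ZMod 2) else 0)
        = p.1 := by
      funext i
      simp only [mem_filter, mem_univ, true_and]
      exact hval _
    have hr : (fun i => if k - i ∈ univ.filter (fun j => p.2 (k - j) ≠ 0)
        then (1 : ZMod 2) else 0) = p.2 := by
      funext i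
      simp only [mem_filter, mem_univ, true_and, sub_sub_cancel]
      exact hval _
    obtain ⟨p1, p2⟩ := p
    rw [Prod.mk.injEq]
    exact ⟨hx, hr⟩
  case _ri =>
    intro q hq
    beta_reduce
    have e1 : (univ.filter (fun i => (if i ∈ q.1 then (1 : ZMod 2) else 0) ≠ 0)) = q.1 := by
      ext i
      simp only [mem_filter, mem_univ, true_and]
      by_cases h : i ∈ q.1 <;> simp [h]
    have e2' : (univ.filter (fun j => (if k - (k - j) ∈ q.2 then (1 : ZMod 2) else 0) ≠ 0))
        = q.2 := by
      ext j
      simp only [mem_filter, mem_univ, true_and, sub_sub_cancel]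
      by_cases h : j ∈ q.2 <;> simp [h]
    obtain ⟨q1, q2⟩ := q
    rw [Prod.mk.injEq]
    exact ⟨e1, e2'⟩

/-- For `x` uniform of weight `w`, `r` uniform of weight `w_r`, independent, and
`z = x·r` the cyclic convolution over `F_2`, each coordinate `z_k` satisfies
`P[z_k = 1] = (1/(C(n,w)C(n,w_r))) Σ_{ℓ odd} C(n,ℓ)C(n−ℓ,w−ℓ)C(n−w,w_r−ℓ)`.
The probability is expressed as a ratio of counts over the uniform distribution
on pairs of fixed-weight vectors. -/
theorem stmt1 (n w wr : ℕ) (hn : 0 < n) (hw : w ≤ n) (hwr : wr ≤ n) (k : Fin n) :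
    ((Finset.univ.filter
      (fun p : (Fin n → ZMod 2) × (Fin n → ZMod 2) =>
        (Finset.univ.filter (fun i => p.1 i ≠ 0)).card = w ∧
        (Finset.univ.filter (fun i => p.2 i ≠ 0)).card = wr ∧
        (∑ i : Fin n, p.1 i * p.2 (k - i)) = 1)).card : ℚ)
      / ((Nat.choose n w : ℚ) * (Nat.choose n wr : ℚ))
    = (1 / ((Nat.choose n w : ℚ) * (Nat.choose n wr : ℚ))) *
        ∑ ℓ ∈ (Finset.Icc 1 (min w wr)).filter (fun ℓ => Odd ℓ),
          ((Nat.choose n ℓ * Nat.choose (n - ℓ) (w - ℓ) * Nat.choose (n - w) (wr - ℓ) : ℕ) : ℚ) := by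
  haveI : NeZero n := ⟨hn.ne'⟩
  have key := (countFun w wr k).trans (countPairs w wr hw hwr)
  rw [key]
  push_cast
  ring
end

section
/- Let c and c' be two binary vectors of length n, each of weight d, whose supports intersect in exactly d/2 positions. Let e be a random error vector whose bits are i.i.d. Bernoulli(p). Then the probability that the weight of e restricted to the support of c equals d/2 and simultaneously the weight of e restricted to the support of c' equals d/2 is Σ_{j=0}^{d/2} C(d/2, j)³ p^{d−j} (1−p)^{d/2 + j}. -/
open Finset

lemma keyI {α : Type*} [DecidableEq α] (E : Finset α) {T u : Finset α} (h : u ⊆ T) :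
    E ∩ T ∩ u = E ∩ u := by
  rw [Finset.inter_assoc, Finset.inter_eq_right.2 h]

lemma aux_split {α : Type*} [DecidableEq α] {s t : Finset α} (hst : Disjoint s t)
    (f : Finset α → Finset α → ℝ) :
    ∑ E ∈ (s ∪ t).powerset, f (E ∩ s) (E ∩ t)
      = ∑ a ∈ s.powerset, ∑ b ∈ t.powerset, f a b := by
  rw [← Finset.sum_product']
  refine Finset.sum_nbij' (fun E => (E ∩ s, E ∩ t)) (fun P => P.1 ∪ P.2) ?_ ?_ ?_ ?_ ?_
  · intro E hE
    simp only [Finset.mem_product, Finset.mem_powerset] at *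
    exact ⟨Finset.inter_subset_right, Finset.inter_subset_right⟩
  · intro P hP
    simp only [Finset.mem_product, Finset.mem_powerset] at *
    exact Finset.union_subset_union hP.1 hP.2
  · intro E hE
    simp only [Finset.mem_powerset] at hE
    show E ∩ s ∪ E ∩ t = E
    rw [← Finset.inter_union_distrib_left, Finset.inter_eq_left.2 hE]
  · intro P hP
    simp only [Finset.mem_product, Finset.mem_powerset] at hP
    have h1 : (P.1 ∪ P.2) ∩ s = P.1 := by
      rw [Finset.union_inter_distrib_right, Finset.inter_eq_left.2 hP.1,
        Finset.disjoint_iff_inter_eq_empty.1 (Finset.disjoint_of_subset_left hP.2 hst.symm),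
        Finset.union_empty]
    have h2 : (P.1 ∪ P.2) ∩ t = P.2 := by
      rw [Finset.union_inter_distrib_right, Finset.inter_eq_left.2 hP.2,
        Finset.disjoint_iff_inter_eq_empty.1 (Finset.disjoint_of_subset_left hP.1 hst),
        Finset.empty_union]
    simp [h1, h2]
  · intro E hE; rfl

lemma aux_split3 {α : Type*} [DecidableEq α] {s t u : Finset α}
    (hst : Disjoint s (t ∪ u)) (htu : Disjoint t u) (f : Finset α → Finset α → Finset α → ℝ) :
    ∑ E ∈ (s ∪ (t ∪ u)).powerset, f (E ∩ s) (E ∩ t) (E ∩ u)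
      = ∑ a ∈ s.powerset, ∑ b ∈ t.powerset, ∑ x ∈ u.powerset, f a b x := by
  have h1 : ∑ E ∈ (s ∪ (t ∪ u)).powerset, f (E ∩ s) (E ∩ t) (E ∩ u)
      = ∑ E ∈ (s ∪ (t ∪ u)).powerset,
          (fun a E₂ => f a (E₂ ∩ t) (E₂ ∩ u)) (E ∩ s) (E ∩ (t ∪ u)) := by
    refine Finset.sum_congr rfl fun E hE => ?_
    simp only []
    rw [keyI E Finset.subset_union_left, keyI E Finset.subset_union_right]
  refine h1.trans ((aux_split hst fun a E₂ => f a (E₂ ∩ t) (E₂ ∩ u)).trans ?_)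
  exact Finset.sum_congr rfl fun a _ => aux_split htu (f a)

lemma aux_split4 {α : Type*} [DecidableEq α] {s t u v : Finset α}
    (hst : Disjoint s (t ∪ (u ∪ v))) (htu : Disjoint t (u ∪ v)) (huv : Disjoint u v)
    (f : Finset α → Finset α → Finset α → Finset α → ℝ) :
    ∑ E ∈ (s ∪ (t ∪ (u ∪ v))).powerset, f (E ∩ s) (E ∩ t) (E ∩ u) (E ∩ v)
      = ∑ a ∈ s.powerset, ∑ b ∈ t.powerset, ∑ x ∈ u.powerset, ∑ y ∈ v.powerset, f a b x y := by
  have h1 : ∑ E ∈ (s ∪ (t ∪ (u ∪ v))).powerset, f (E ∩ s) (E ∩ t) (E ∩ u) (E ∩ v)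
      = ∑ E ∈ (s ∪ (t ∪ (u ∪ v))).powerset,
          (fun a E₂ => f a (E₂ ∩ t) (E₂ ∩ u) (E₂ ∩ v)) (E ∩ s) (E ∩ (t ∪ (u ∪ v))) := by
    refine Finset.sum_congr rfl fun E hE => ?_
    simp only []
    rw [keyI E Finset.subset_union_left,
      keyI E (Finset.subset_union_left.trans Finset.subset_union_right),
      keyI E (Finset.subset_union_right.trans Finset.subset_union_right)]
  refine h1.trans ((aux_split hst fun a E₂ => f a (E₂ ∩ t) (E₂ ∩ u) (E₂ ∩ v)).trans ?_)
  exact Finset.sum_congr rfl fun a _ => aux_split3 htu huv (f a)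

lemma aux_binom {α : Type*} [DecidableEq α] (s : Finset α) (k : ℕ) (p q : ℝ) :
    ∑ E ∈ s.powerset, (if E.card = k then p ^ E.card * q ^ (s.card - E.card) else 0)
      = (s.card.choose k : ℝ) * (p ^ k * q ^ (s.card - k)) := by
  rw [← Finset.sum_filter, ← Finset.powersetCard_eq_filter]
  rw [Finset.sum_congr rfl (fun E hE => by
    rw [(Finset.mem_powersetCard.1 hE).2])]
  rw [Finset.sum_const, Finset.card_powersetCard, nsmul_eq_mul]

lemma aux_total {α : Type*} [DecidableEq α] (s : Finset α) (p q : ℝ) :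
    ∑ E ∈ s.powerset, p ^ E.card * q ^ (s.card - E.card) = (p + q) ^ s.card := by
  rw [Finset.sum_powerset, add_pow]
  refine Finset.sum_congr rfl fun j hj => ?_
  rw [Finset.sum_congr rfl (fun E hE => by rw [(Finset.mem_powersetCard.1 hE).2]),
    Finset.sum_const, Finset.card_powersetCard, nsmul_eq_mul]
  ring

/-- Let `c, c'` be binary vectors of length `n`, each of weight `d` (with `d` even),
whose supports intersect in exactly `d/2` positions. For an error `e` with i.i.d.
`Bernoulli(p)` bits, the probability that `e` has weight exactly `d/2` on the support
of `c` and simultaneously weight exactly `d/2` on the support of `c'` is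
`Σ_{j=0}^{d/2} C(d/2,j)³ p^{d−j} (1−p)^{d/2+j}`. -/
theorem stmt11 (n d : ℕ) (hd : 2 ∣ d) (p : ℝ) (hp0 : 0 ≤ p) (hp1 : p ≤ 1)
    (c c' : Fin n → ZMod 2)
    (hwc : hammingNorm c = d) (hwc' : hammingNorm c' = d)
    (hint : (Finset.univ.filter (fun i => c i = 1 ∧ c' i = 1)).card = d / 2) :
    (∑ e : Fin n → ZMod 2,
        if (Finset.univ.filter (fun i => c i = 1 ∧ e i = 1)).card = d / 2 ∧
           (Finset.univ.filter (fun i => c' i = 1 ∧ e i = 1)).card = d / 2 then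
          p ^ hammingNorm e * (1 - p) ^ (n - hammingNorm e) else 0)
      = ∑ j ∈ Finset.range (d / 2 + 1),
          ((Nat.choose (d / 2) j : ℝ)) ^ 3 * p ^ (d - j) * (1 - p) ^ (d / 2 + j) := by
  classical
  set q : ℝ := 1 - p with hqdef
  have hq : p + q = 1 := by rw [hqdef]; ring
  set A : Finset (Fin n) := univ.filter (fun i => c i = 1) with hA
  set B : Finset (Fin n) := univ.filter (fun i => c' i = 1) with hB
  have zmod2 : ∀ x : ZMod 2, x ≠ 0 ↔ x = 1 := by decide
  have hAd : A.card = d := by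
    rw [← hwc]
    unfold hammingNorm
    congr 1
    exact Finset.filter_congr fun i _ => (zmod2 (c i)).symm
  have hBd : B.card = d := by
    rw [← hwc']
    unfold hammingNorm
    congr 1
    exact Finset.filter_congr fun i _ => (zmod2 (c' i)).symm
  have hIcard : (A ∩ B).card = d / 2 := by
    rw [← hint]; congr 1
    rw [hA, hB, ← Finset.filter_and]
  set I := A ∩ B with hI
  set X := A \ B with hX
  set Y := B \ A with hY
  set R := (A ∪ B)ᶜ with hR
  have hIc : I.card = d / 2 := hIcard
  have hXc : X.card = d / 2 := by
    have h := Finset.card_sdiff_add_card_inter A B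
    rw [hAd] at h; rw [hX]; rw [← hI] at h; rw [hIc] at h; omega
  have hYc : Y.card = d / 2 := by
    have h := Finset.card_sdiff_add_card_inter B A
    rw [hBd, Finset.inter_comm, ← hI, hIc] at h
    rw [hY]; omega
  have hd1 : Disjoint I (X ∪ (Y ∪ R)) := by
    rw [Finset.disjoint_left]
    intro a ha hb
    simp only [hI, hX, hY, hR, Finset.mem_inter, Finset.mem_sdiff, Finset.mem_union,
      Finset.mem_compl] at ha hb
    tauto
  have hd2 : Disjoint X (Y ∪ R) := by
    rw [Finset.disjoint_left]
    intro a ha hb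
    simp only [hX, hY, hR, Finset.mem_sdiff, Finset.mem_union, Finset.mem_compl] at ha hb
    tauto
  have hd3 : Disjoint Y R := by
    rw [Finset.disjoint_left]
    intro a ha hb
    simp only [hY, hR, Finset.mem_sdiff, Finset.mem_union, Finset.mem_compl] at ha hb
    tauto
  have hIX : Disjoint I X := Finset.disjoint_union_right.1 hd1 |>.1
  have hIY : Disjoint I Y := (Finset.disjoint_union_right.1 (Finset.disjoint_union_right.1 hd1).2).1
  have huniv : (univ : Finset (Fin n)) = I ∪ (X ∪ (Y ∪ R)) := by
    ext a
    simp only [hI, hX, hY, hR, Finset.mem_inter, Finset.mem_sdiff, Finset.mem_union,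
      Finset.mem_compl, Finset.mem_univ, true_iff]
    tauto
  have hn : I.card + (X.card + (Y.card + R.card)) = n := by
    have h : (I ∪ (X ∪ (Y ∪ R))).card = n := by
      rw [← huniv, Finset.card_univ, Fintype.card_fin]
    rwa [Finset.card_union_of_disjoint hd1, Finset.card_union_of_disjoint hd2,
      Finset.card_union_of_disjoint hd3] at h
  -- Step A: sum over functions → sum over subsets
  have stepA : (∑ e : Fin n → ZMod 2,
        if (Finset.univ.filter (fun i => c i = 1 ∧ e i = 1)).card = d / 2 ∧
           (Finset.univ.filter (fun i => c' i = 1 ∧ e i = 1)).card = d / 2 then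
          p ^ hammingNorm e * q ^ (n - hammingNorm e) else 0)
      = ∑ E ∈ (univ : Finset (Fin n)).powerset,
          (if (A ∩ E).card = d / 2 ∧ (B ∩ E).card = d / 2 then
            p ^ E.card * q ^ (n - E.card) else 0) := by
    refine Finset.sum_nbij' (fun e => univ.filter (fun i => e i = 1))
      (fun E => fun i => if i ∈ E then 1 else 0) ?_ ?_ ?_ ?_ ?_
    · intro e _; exact Finset.mem_powerset.2 (Finset.filter_subset _ _)
    · intro E _; exact Finset.mem_univ _
    · intro e _
      funext i
      simp only [Finset.mem_filter, Finset.mem_univ, true_and]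
      by_cases h : e i = 1
      · rw [if_pos h, h]
      · rw [if_neg h]
        rcases (zmod2 (e i)) with ⟨h1, h2⟩
        by_contra h3
        exact h (h1 fun h0 => h3 h0.symm)
    · intro E _
      ext i
      simp only [Finset.mem_filter, Finset.mem_univ, true_and]
      by_cases h : i ∈ E <;> simp [h]
    · intro e _
      have hnorm : hammingNorm e = (univ.filter (fun i => e i = 1)).card := by
        unfold hammingNorm
        congr 1
        exact Finset.filter_congr fun i _ => zmod2 (e i)
      have hfc : (Finset.univ.filter (fun i => c i = 1 ∧ e i = 1))
          = A ∩ univ.filter (fun i => e i = 1) := by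
        rw [hA, ← Finset.filter_and]
      have hfc' : (Finset.univ.filter (fun i => c' i = 1 ∧ e i = 1))
          = B ∩ univ.filter (fun i => e i = 1) := by
        rw [hB, ← Finset.filter_and]
      rw [hnorm, hfc, hfc']
  rw [stepA]
  -- Step B: decompose each E over the partition I, X, Y, R
  have stepB : ∑ E ∈ (univ : Finset (Fin n)).powerset,
          (if (A ∩ E).card = d / 2 ∧ (B ∩ E).card = d / 2 then
            p ^ E.card * q ^ (n - E.card) else 0)
      = ∑ E ∈ (I ∪ (X ∪ (Y ∪ R))).powerset,
          (fun a x y r =>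
            if a.card + x.card = d / 2 ∧ a.card + y.card = d / 2 then
              p ^ (a.card + (x.card + (y.card + r.card))) *
                q ^ (n - (a.card + (x.card + (y.card + r.card)))) else 0)
            (E ∩ I) (E ∩ X) (E ∩ Y) (E ∩ R) := by
    rw [← huniv]
    refine Finset.sum_congr rfl fun E hE => ?_
    simp only []
    have eA : A ∩ E = (E ∩ I) ∪ (E ∩ X) := by
      ext i
      simp only [hI, hX, Finset.mem_inter, Finset.mem_sdiff, Finset.mem_union]
      tauto
    have eB : B ∩ E = (E ∩ I) ∪ (E ∩ Y) := by
      ext i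
      simp only [hI, hY, Finset.mem_inter, Finset.mem_sdiff, Finset.mem_union]
      tauto
    have cA : (A ∩ E).card = (E ∩ I).card + (E ∩ X).card := by
      rw [eA, Finset.card_union_of_disjoint
        (hIX.mono Finset.inter_subset_right Finset.inter_subset_right)]
    have cB : (B ∩ E).card = (E ∩ I).card + (E ∩ Y).card := by
      rw [eB, Finset.card_union_of_disjoint
        (hIY.mono Finset.inter_subset_right Finset.inter_subset_right)]
    have cE : E.card = (E ∩ I).card + ((E ∩ X).card + ((E ∩ Y).card + (E ∩ R).card)) := by
      conv_lhs => rw [← Finset.inter_univ E, huniv]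
      rw [Finset.inter_union_distrib_left, Finset.inter_union_distrib_left,
        Finset.inter_union_distrib_left,
        Finset.card_union_of_disjoint (hd1.mono Finset.inter_subset_right
          (Finset.union_subset_union Finset.inter_subset_right
            (Finset.union_subset_union Finset.inter_subset_right Finset.inter_subset_right))),
        Finset.card_union_of_disjoint (hd2.mono Finset.inter_subset_right
          (Finset.union_subset_union Finset.inter_subset_right Finset.inter_subset_right)),
        Finset.card_union_of_disjoint (hd3.mono Finset.inter_subset_right
          Finset.inter_subset_right)]
    rw [cA, cB, cE]
  rw [stepB]
  refine (aux_split4 hd1 hd2 hd3 (fun a x y r =>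
      if a.card + x.card = d / 2 ∧ a.card + y.card = d / 2 then
        p ^ (a.card + (x.card + (y.card + r.card))) *
          q ^ (n - (a.card + (x.card + (y.card + r.card)))) else 0)).trans ?_
  -- Step C: evaluate the quadruple sum
  have stepR : ∀ a ∈ I.powerset, ∀ x ∈ X.powerset, ∀ y ∈ Y.powerset,
      (∑ r ∈ R.powerset,
        (if a.card + x.card = d / 2 ∧ a.card + y.card = d / 2 then
          p ^ (a.card + (x.card + (y.card + r.card))) *
            q ^ (n - (a.card + (x.card + (y.card + r.card)))) else 0))
      = (if a.card + x.card = d / 2 ∧ a.card + y.card = d / 2 then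
          p ^ (a.card + (x.card + y.card)) *
            q ^ ((d / 2 - a.card) + ((d / 2 - x.card) + (d / 2 - y.card))) else 0) := by
    intro a ha x hx y hy
    have hca : a.card ≤ d / 2 := hIc ▸ Finset.card_le_card (Finset.mem_powerset.1 ha)
    have hcx : x.card ≤ d / 2 := hXc ▸ Finset.card_le_card (Finset.mem_powerset.1 hx)
    have hcy : y.card ≤ d / 2 := hYc ▸ Finset.card_le_card (Finset.mem_powerset.1 hy)
    have h1 : ∀ r ∈ R.powerset,
        (if a.card + x.card = d / 2 ∧ a.card + y.card = d / 2 then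
          p ^ (a.card + (x.card + (y.card + r.card))) *
            q ^ (n - (a.card + (x.card + (y.card + r.card)))) else 0)
        = (if a.card + x.card = d / 2 ∧ a.card + y.card = d / 2 then
            p ^ (a.card + (x.card + y.card)) *
              q ^ ((d / 2 - a.card) + ((d / 2 - x.card) + (d / 2 - y.card))) else 0)
          * (p ^ r.card * q ^ (R.card - r.card)) := by
      intro r hr
      have hcr : r.card ≤ R.card := Finset.card_le_card (Finset.mem_powerset.1 hr)
      by_cases hcond : a.card + x.card = d / 2 ∧ a.card + y.card = d / 2
      · rw [if_pos hcond, if_pos hcond]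
        have he : n - (a.card + (x.card + (y.card + r.card)))
            = ((d / 2 - a.card) + ((d / 2 - x.card) + (d / 2 - y.card))) + (R.card - r.card) := by
          omega
        rw [he, pow_add, pow_add, pow_add]
        ring
      · rw [if_neg hcond, if_neg hcond, zero_mul]
    rw [Finset.sum_congr rfl h1, ← Finset.mul_sum, aux_total, hq, one_pow, mul_one]
  have stepY : ∀ a ∈ I.powerset, ∀ x ∈ X.powerset,
      (∑ y ∈ Y.powerset,
        (if a.card + x.card = d / 2 ∧ a.card + y.card = d / 2 then
          p ^ (a.card + (x.card + y.card)) *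
            q ^ ((d / 2 - a.card) + ((d / 2 - x.card) + (d / 2 - y.card))) else 0))
      = (if a.card + x.card = d / 2 then
          p ^ (a.card + x.card) * q ^ ((d / 2 - a.card) + (d / 2 - x.card)) else 0)
        * (((d / 2).choose (d / 2 - a.card) : ℝ) * (p ^ (d / 2 - a.card) * q ^ a.card)) := by
    intro a ha x hx
    have hca : a.card ≤ d / 2 := hIc ▸ Finset.card_le_card (Finset.mem_powerset.1 ha)
    have h1 : ∀ y ∈ Y.powerset,
        (if a.card + x.card = d / 2 ∧ a.card + y.card = d / 2 then
          p ^ (a.card + (x.card + y.card)) *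
            q ^ ((d / 2 - a.card) + ((d / 2 - x.card) + (d / 2 - y.card))) else 0)
        = (if a.card + x.card = d / 2 then
            p ^ (a.card + x.card) * q ^ ((d / 2 - a.card) + (d / 2 - x.card)) else 0)
          * (if y.card = d / 2 - a.card then p ^ y.card * q ^ (Y.card - y.card) else 0) := by
      intro y hy
      have hcy : y.card ≤ d / 2 := hYc ▸ Finset.card_le_card (Finset.mem_powerset.1 hy)
      by_cases h2 : a.card + x.card = d / 2
      · by_cases h3 : a.card + y.card = d / 2
        · rw [if_pos ⟨h2, h3⟩, if_pos h2, if_pos (by omega : y.card = d / 2 - a.card), hYc]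
          have he1 : a.card + (x.card + y.card) = (a.card + x.card) + y.card := by omega
          have he2 : (d / 2 - a.card) + ((d / 2 - x.card) + (d / 2 - y.card))
              = ((d / 2 - a.card) + (d / 2 - x.card)) + (d / 2 - y.card) := by omega
          rw [he1, he2, pow_add, pow_add]
          ring
        · rw [if_neg (fun h => h3 h.2), if_neg (by omega : ¬ y.card = d / 2 - a.card), mul_zero]
      · rw [if_neg (fun h => h2 h.1), if_neg h2, zero_mul]
    rw [Finset.sum_congr rfl h1, ← Finset.mul_sum, aux_binom, hYc]
    have : d / 2 - (d / 2 - a.card) = a.card := by omega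
    rw [this]
  have stepX : ∀ a ∈ I.powerset,
      (∑ x ∈ X.powerset,
        (if a.card + x.card = d / 2 then
          p ^ (a.card + x.card) * q ^ ((d / 2 - a.card) + (d / 2 - x.card)) else 0)
        * (((d / 2).choose (d / 2 - a.card) : ℝ) * (p ^ (d / 2 - a.card) * q ^ a.card)))
      = (((d / 2).choose (d / 2 - a.card) : ℝ) * (p ^ (d / 2 - a.card) * q ^ a.card))
        * (p ^ a.card * q ^ (d / 2 - a.card))
        * (((d / 2).choose (d / 2 - a.card) : ℝ) * (p ^ (d / 2 - a.card) * q ^ a.card)) := by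
    intro a ha
    have hca : a.card ≤ d / 2 := hIc ▸ Finset.card_le_card (Finset.mem_powerset.1 ha)
    have h1 : ∀ x ∈ X.powerset,
        (if a.card + x.card = d / 2 then
          p ^ (a.card + x.card) * q ^ ((d / 2 - a.card) + (d / 2 - x.card)) else 0)
        * (((d / 2).choose (d / 2 - a.card) : ℝ) * (p ^ (d / 2 - a.card) * q ^ a.card))
        = (if x.card = d / 2 - a.card then p ^ x.card * q ^ (X.card - x.card) else 0)
          * ((p ^ a.card * q ^ (d / 2 - a.card))
            * (((d / 2).choose (d / 2 - a.card) : ℝ) * (p ^ (d / 2 - a.card) * q ^ a.card))) := by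
      intro x hx
      have hcx : x.card ≤ d / 2 := hXc ▸ Finset.card_le_card (Finset.mem_powerset.1 hx)
      by_cases h2 : a.card + x.card = d / 2
      · rw [if_pos h2, if_pos (by omega : x.card = d / 2 - a.card), hXc]
        have he1 : a.card + x.card = x.card + a.card := by omega
        have he2 : (d / 2 - a.card) + (d / 2 - x.card) = (d / 2 - x.card) + (d / 2 - a.card) := by
          omega
        rw [he1, he2, pow_add, pow_add]
        ring
      · rw [if_neg h2, if_neg (by omega : ¬ x.card = d / 2 - a.card), zero_mul, zero_mul]
    rw [Finset.sum_congr rfl h1, ← Finset.sum_mul, aux_binom, hXc]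
    have h3 : d / 2 - (d / 2 - a.card) = a.card := by omega
    rw [h3]
    ring
  calc ∑ a ∈ I.powerset, ∑ x ∈ X.powerset, ∑ y ∈ Y.powerset, ∑ r ∈ R.powerset,
        (if a.card + x.card = d / 2 ∧ a.card + y.card = d / 2 then
          p ^ (a.card + (x.card + (y.card + r.card))) *
            q ^ (n - (a.card + (x.card + (y.card + r.card)))) else 0)
      = ∑ a ∈ I.powerset,
          (((d / 2).choose (d / 2 - a.card) : ℝ) * (p ^ (d / 2 - a.card) * q ^ a.card))
            * (p ^ a.card * q ^ (d / 2 - a.card))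
            * (((d / 2).choose (d / 2 - a.card) : ℝ) * (p ^ (d / 2 - a.card) * q ^ a.card)) := by
        refine Finset.sum_congr rfl fun a ha => ?_
        rw [← stepX a ha]
        refine Finset.sum_congr rfl fun x hx => ?_
        rw [← stepY a ha x hx]
        exact Finset.sum_congr rfl fun y hy => stepR a ha x hx y hy
    _ = ∑ j ∈ Finset.range (d / 2 + 1),
          ((d / 2).choose j : ℝ) *
            ((((d / 2).choose (d / 2 - j) : ℝ) * (p ^ (d / 2 - j) * q ^ j))
              * (p ^ j * q ^ (d / 2 - j))
              * (((d / 2).choose (d / 2 - j) : ℝ) * (p ^ (d / 2 - j) * q ^ j))) := by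
        rw [Finset.sum_powerset, hIc]
        refine Finset.sum_congr rfl fun j hj => ?_
        rw [Finset.sum_congr rfl (fun a ha => by
          rw [(Finset.mem_powersetCard.1 ha).2]), Finset.sum_const,
          Finset.card_powersetCard, hIc, nsmul_eq_mul]
    _ = ∑ j ∈ Finset.range (d / 2 + 1),
          ((Nat.choose (d / 2) j : ℝ)) ^ 3 * p ^ (d - j) * q ^ (d / 2 + j) := by
        refine Finset.sum_congr rfl fun j hj => ?_
        have hj' : j ≤ d / 2 := by
          have := Finset.mem_range.1 hj; omega
        rw [Nat.choose_symm hj']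
        have e1 : d - j = (d / 2 - j) + (j + (d / 2 - j)) := by omega
        have e2 : d / 2 + j = j + ((d / 2 - j) + j) := by omega
        rw [e1, e2, pow_add, pow_add, pow_add, pow_add]
        ring
end
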